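/- Let a₁, a₂ ∈ ℂ^M be unit-norm vectors with a_c = a₁ᴴa₂ and |a_c| < 1, and let γ₁, γ₂ ≥ 0 be real. Then the minimum of ‖w‖² over all w ∈ ℂ^M satisfying the modulus constraints |a₁ᴴw| = γ₁ and |a₂ᴴw| = γ₂ equals (γ₁² + γ₂² − 2 γ₁ γ₂ |a_c|) / (1 − |a_c|²). -/

import Mathlib

open Matrix Complex

theorem P1_aux (M : ℕ) (a1 a2 : EuclideanSpace ℂ (Fin M))
    (h1 : ‖a1‖ = 1) (h2 : ‖a2‖ = 1)
    (hc : ‖(inner ℂ a1 a2 : ℂ)‖ < 1)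
    (γ1 γ2 : ℝ) (hγ1 : 0 ≤ γ1) (hγ2 : 0 ≤ γ2) :
    IsLeast {p : ℝ | ∃ w : EuclideanSpace ℂ (Fin M),
        ‖(inner ℂ a1 w : ℂ)‖ = γ1 ∧ ‖(inner ℂ a2 w : ℂ)‖ = γ2 ∧ p = ‖w‖ ^ 2}
      ((γ1 ^ 2 + γ2 ^ 2 - 2 * γ1 * γ2 * ‖(inner ℂ a1 a2 : ℂ)‖) /
        (1 - ‖(inner ℂ a1 a2 : ℂ)‖ ^ 2)) := by
  set c : ℂ := inner ℂ a1 a2 with hc_def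
  set ρ : ℝ := ‖c‖ with hρ_def
  have hρ0 : 0 ≤ ρ := norm_nonneg c
  have hρ1 : ρ < 1 := hc
  have hD : (0:ℝ) < 1 - ρ ^ 2 := by nlinarith
  have hDne : (1 - ρ ^ 2 : ℝ) ≠ 0 := ne_of_gt hD
  have hDCne : ((1 - ρ ^ 2 : ℝ) : ℂ) ≠ 0 := by exact_mod_cast hDne
  have hA11 : (inner ℂ a1 a1 : ℂ) = 1 := by
    rw [inner_self_eq_norm_sq_to_K, h1]; norm_num
  have hA22 : (inner ℂ a2 a2 : ℂ) = 1 := by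
    rw [inner_self_eq_norm_sq_to_K, h2]; norm_num
  have hA21 : (inner ℂ a2 a1 : ℂ) = (starRingEnd ℂ) c := (inner_conj_symm a2 a1).symm
  have hccρ : c * (starRingEnd ℂ) c = ((ρ:ℂ)) ^ 2 := by
    rw [Complex.mul_conj']
  constructor
  · -- membership: explicit witness
    set u : ℂ := if c = 0 then 1 else (starRingEnd ℂ) c / ρ with hu_def
    have hρCne : c ≠ 0 → (ρ:ℂ) ≠ 0 := fun h => by
      simpa [hρ_def] using norm_ne_zero_iff.mpr h
    have hcu : (starRingEnd ℂ) c = (ρ:ℂ) * u := by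
      by_cases h : c = 0
      · simp [hu_def, h, hρ_def]
      · rw [hu_def, if_neg h, mul_comm, div_mul_cancel₀ _ (hρCne h)]
    have hnu : ‖u‖ = 1 := by
      by_cases h : c = 0
      · simp [hu_def, h]
      · have hρne : ρ ≠ 0 := by simpa [hρ_def] using h
        rw [hu_def, if_neg h]
        rw [norm_div, RCLike.norm_conj, Complex.norm_real, Real.norm_of_nonneg hρ0, ← hρ_def]
        field_simp
    have huc : u * c = (ρ:ℂ) := by
      by_cases h : c = 0
      · simp [hu_def, h, hρ_def]
      · rw [hu_def, if_neg h, div_mul_eq_mul_div, eq_comm, eq_div_iff (hρCne h)]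
        rw [mul_comm ((starRingEnd ℂ) c) c, hccρ]; ring
    have hucconj : (starRingEnd ℂ) u * (starRingEnd ℂ) c = (ρ:ℂ) := by
      have h := congrArg (starRingEnd ℂ) huc
      simp only [_root_.map_mul, Complex.conj_ofReal] at h
      linear_combination h
    have huu : (starRingEnd ℂ) u * u = 1 := by
      rw [mul_comm, Complex.mul_conj', hnu]; norm_num
    set α : ℝ := (γ1 - ρ * γ2) / (1 - ρ ^ 2) with hα_def
    set β : ℝ := (γ2 - ρ * γ1) / (1 - ρ ^ 2) with hβ_def
    refine ⟨(α:ℂ) • a1 + ((β:ℂ) * u) • a2, ?_, ?_, ?_⟩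
    · have key : (inner ℂ a1 ((α:ℂ) • a1 + ((β:ℂ) * u) • a2) : ℂ) = ((α + β * ρ : ℝ) : ℂ) := by
        simp only [inner_add_right, inner_smul_right, hA11, ← hc_def, mul_one]
        push_cast
        linear_combination (β:ℂ) * huc
      rw [key]
      have hval : α + β * ρ = γ1 := by
        rw [hα_def, hβ_def]; field_simp; ring
      rw [hval, Complex.norm_real, Real.norm_of_nonneg hγ1]
    · have key : (inner ℂ a2 ((α:ℂ) • a1 + ((β:ℂ) * u) • a2) : ℂ) = ((α * ρ + β : ℝ) : ℂ) * u := by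
        simp only [inner_add_right, inner_smul_right, hA22, hA21, mul_one]
        push_cast
        linear_combination (α:ℂ) * hcu
      rw [key]
      have hval : α * ρ + β = γ2 := by
        rw [hα_def, hβ_def]; field_simp; ring
      rw [hval, norm_mul, Complex.norm_real, Real.norm_of_nonneg hγ2, hnu, mul_one]
    · have hinner : (inner ℂ ((α:ℂ) • a1 + ((β:ℂ) * u) • a2) ((α:ℂ) • a1 + ((β:ℂ) * u) • a2) : ℂ)
          = ((α^2 + β^2 + 2*α*β*ρ : ℝ) : ℂ) := by
        simp only [inner_add_left, inner_add_right, inner_smul_left, inner_smul_right,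
          hA11, hA22, hA21, ← hc_def, _root_.map_mul, Complex.conj_ofReal, mul_one]
        push_cast
        linear_combination ((α:ℂ)*(β:ℂ)) * huc + ((α:ℂ)*(β:ℂ)) * hucconj + ((β:ℂ)^2) * huu
      have hn : ‖(α:ℂ) • a1 + ((β:ℂ) * u) • a2‖ ^ 2 = α^2 + β^2 + 2*α*β*ρ := by
        rw [← inner_self_eq_norm_sq (𝕜 := ℂ), hinner]; exact RCLike.ofReal_re _
      rw [hn, hα_def, hβ_def]; field_simp; ring
  · -- lower bound
    rintro p ⟨w, hw1, hw2, rfl⟩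
    set t1 : ℂ := inner ℂ a1 w with ht1_def
    set t2 : ℂ := inner ℂ a2 w with ht2_def
    set μ : ℂ := (t1 - c * t2) / ((1 - ρ ^ 2 : ℝ) : ℂ) with hμ_def
    set ν : ℂ := (t2 - (starRingEnd ℂ) c * t1) / ((1 - ρ ^ 2 : ℝ) : ℂ) with hν_def
    set v : EuclideanSpace ℂ (Fin M) := μ • a1 + ν • a2 with hv_def
    have hD' : ((1 - ρ^2 : ℝ) : ℂ) = 1 - c * (starRingEnd ℂ) c := by
      rw [hccρ]; push_cast; ring
    have hD'ne : (1 : ℂ) - c * (starRingEnd ℂ) c ≠ 0 := by rw [← hD']; exact hDCne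
    have hvw : (inner ℂ v w : ℂ) = (starRingEnd ℂ) μ * t1 + (starRingEnd ℂ) ν * t2 := by
      simp only [hv_def, inner_add_left, inner_smul_left, ← ht1_def, ← ht2_def]
    have hvv : (inner ℂ v v : ℂ) = (inner ℂ v w : ℂ) := by
      rw [hvw]
      simp only [hv_def, inner_add_left, inner_add_right, inner_smul_left, inner_smul_right,
        hA11, hA22, hA21, ← hc_def, mul_one]
      rw [hμ_def, hν_def]
      simp only [map_div₀, _root_.map_sub, _root_.map_mul, Complex.conj_ofReal]
      rw [hD']
      field_simp
      ring
    set r : ℝ := (c * (starRingEnd ℂ) t1 * t2).re with hr_def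
    have hX : ((1 - ρ^2 : ℝ) : ℂ) * (inner ℂ v w : ℂ) = ((γ1^2 + γ2^2 - 2 * r : ℝ) : ℂ) := by
      rw [hvw, hμ_def, hν_def]
      simp only [map_div₀, _root_.map_sub, _root_.map_mul, Complex.conj_ofReal]
      have e1 : (starRingEnd ℂ) t1 * t1 = ((γ1^2 : ℝ) : ℂ) := by
        rw [mul_comm, Complex.mul_conj', hw1]; push_cast; ring
      have e2 : (starRingEnd ℂ) t2 * t2 = ((γ2^2 : ℝ) : ℂ) := by
        rw [mul_comm, Complex.mul_conj', hw2]; push_cast; ring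
      have e3 : c * (starRingEnd ℂ) t1 * t2 + (starRingEnd ℂ) (c * (starRingEnd ℂ) t1 * t2)
          = ((2 * r : ℝ) : ℂ) := by rw [hr_def]; exact Complex.add_conj _
      simp only [_root_.map_mul, Complex.conj_conj] at e3
      have h4 : (1:ℂ) - (ρ:ℂ)^2 ≠ 0 := by exact_mod_cast hDne
      push_cast at e1 e2 e3 ⊢
      field_simp
      simp only [Complex.conj_conj]
      linear_combination e1 + e2 - e3
    have hre : (inner ℂ v w : ℂ) = (((γ1^2 + γ2^2 - 2 * r) / (1 - ρ^2) : ℝ) : ℂ) := by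
      have h4 : (1:ℂ) - (ρ:ℂ)^2 ≠ 0 := by exact_mod_cast hDne
      rw [eq_comm]
      push_cast
      rw [div_eq_iff h4]
      push_cast at hX ⊢
      linear_combination -hX
    have hnv : ‖v‖ ^ 2 = (γ1^2 + γ2^2 - 2 * r) / (1 - ρ^2) := by
      rw [← inner_self_eq_norm_sq (𝕜 := ℂ), hvv, hre]; exact RCLike.ofReal_re _
    have hr_le : r ≤ ρ * γ1 * γ2 := by
      calc r ≤ ‖c * (starRingEnd ℂ) t1 * t2‖ := by
            rw [hr_def]
            simpa using Complex.re_le_norm (c * (starRingEnd ℂ) t1 * t2)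
        _ = ρ * γ1 * γ2 := by
            rw [norm_mul, norm_mul, RCLike.norm_conj, hw1, hw2, ← hρ_def]
    have hCS : ‖v‖ ^ 2 ≤ ‖v‖ * ‖w‖ := by
      calc ‖v‖ ^ 2 = RCLike.re (inner ℂ v w : ℂ) := by
            rw [← inner_self_eq_norm_sq (𝕜 := ℂ), hvv]
        _ ≤ ‖(inner ℂ v w : ℂ)‖ := RCLike.re_le_norm _
        _ ≤ ‖v‖ * ‖w‖ := norm_inner_le_norm v w
    have hvw2 : ‖v‖ ^ 2 ≤ ‖w‖ ^ 2 := by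
      nlinarith [norm_nonneg v, norm_nonneg w]
    calc (γ1 ^ 2 + γ2 ^ 2 - 2 * γ1 * γ2 * ρ) / (1 - ρ ^ 2)
        ≤ (γ1^2 + γ2^2 - 2 * r) / (1 - ρ^2) := by
          exact (div_le_div_iff_of_pos_right hD).mpr (by linarith [hr_le])
      _ = ‖v‖ ^ 2 := hnv.symm
      _ ≤ ‖w‖ ^ 2 := hvw2


/-- optimal value of problem P1: the minimum of `‖w‖²` over all `w`
with `|a₁ᴴw| = γ₁` and `|a₂ᴴw| = γ₂` equals
`(γ₁² + γ₂² − 2γ₁γ₂|a_c|)/(1−|a_c|²)`. -/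
theorem P1_optimal_value
    (M : ℕ) (a1 a2 : Fin M → ℂ)
    (h1 : ∑ i, ‖a1 i‖ ^ 2 = 1) (h2 : ∑ i, ‖a2 i‖ ^ 2 = 1)
    (hc : ‖star a1 ⬝ᵥ a2‖ < 1)
    (γ1 γ2 : ℝ) (hγ1 : 0 ≤ γ1) (hγ2 : 0 ≤ γ2) :
    IsLeast
      {p : ℝ | ∃ w : Fin M → ℂ,
        ‖star a1 ⬝ᵥ w‖ = γ1 ∧ ‖star a2 ⬝ᵥ w‖ = γ2 ∧ p = ∑ i, ‖w i‖ ^ 2}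
      ((γ1 ^ 2 + γ2 ^ 2 - 2 * γ1 * γ2 * ‖star a1 ⬝ᵥ a2‖) /
        (1 - ‖star a1 ⬝ᵥ a2‖ ^ 2)) := by
  have edot : ∀ x y : Fin M → ℂ, star x ⬝ᵥ y
      = @inner ℂ (EuclideanSpace ℂ (Fin M)) _
          ((WithLp.equiv 2 (Fin M → ℂ)).symm x) ((WithLp.equiv 2 (Fin M → ℂ)).symm y) := by
    intro x y
    simp [dotProduct, PiLp.inner_apply, RCLike.inner_apply]
    exact Finset.sum_congr rfl fun i _ => mul_comm _ _
  have enorm : ∀ x : Fin M → ℂ,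
      ∑ i, ‖x i‖ ^ 2 = ‖(WithLp.equiv 2 (Fin M → ℂ)).symm x‖ ^ 2 := by
    intro x
    rw [EuclideanSpace.norm_eq, Real.sq_sqrt (by positivity)]
    rfl
  have hn1 : ‖(WithLp.equiv 2 (Fin M → ℂ)).symm a1‖ = 1 := by
    have := (enorm a1).symm.trans h1
    nlinarith [norm_nonneg ((WithLp.equiv 2 (Fin M → ℂ)).symm a1)]
  have hn2 : ‖(WithLp.equiv 2 (Fin M → ℂ)).symm a2‖ = 1 := by
    have := (enorm a2).symm.trans h2
    nlinarith [norm_nonneg ((WithLp.equiv 2 (Fin M → ℂ)).symm a2)]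
  have key := P1_aux M ((WithLp.equiv 2 (Fin M → ℂ)).symm a1)
    ((WithLp.equiv 2 (Fin M → ℂ)).symm a2) hn1 hn2 (by rw [← edot]; exact hc) γ1 γ2 hγ1 hγ2
  rw [edot a1 a2]
  convert key using 2
  ext p
  constructor
  · rintro ⟨w, hw1, hw2, rfl⟩
    exact ⟨(WithLp.equiv 2 (Fin M → ℂ)).symm w, by rw [← edot]; exact hw1,
      by rw [← edot]; exact hw2, enorm w⟩
  · rintro ⟨w, hw1, hw2, rfl⟩
    refine ⟨WithLp.equiv 2 (Fin M → ℂ) w, ?_, ?_, ?_⟩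
    · rw [edot]; simpa using hw1
    · rw [edot]; simpa using hw2
    · rw [enorm]; simp
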